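/- arXiv:2111.14487 — 2 statements merged into one kernel-verified Lean document; each statement's English description precedes it below -/
import Mathlib

section
/- If ξ > 0 satisfies tanh(ξ) = ξ - 1/6 and x = sech(ξ)², then (3/2)·∫_x^1 (1-y)^(1/2)/y dy = 1/2. -/
/-!
With `u = √(1 - y)` one has `d/dy (2 u - 2 artanh u) = √(1 - y) / y`, so
`∫_{1-a²}^1 √(1 - y) / y dy = 2 (artanh a - a)` for `0 ≤ a < 1`. Since `sech² ξ = 1 - tanh² ξ`,
taking `a = tanh ξ` turns the integral into `2 (ξ - tanh ξ) = 1/3`.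
-/

open Real Set

namespace Real

theorem hasDerivAt_artanh {x : ℝ} (hx : x ∈ Ioo (-1) 1) :
    HasDerivAt artanh (1 / (1 - x ^ 2)) x := by
  have hp : 0 < 1 + x := by linarith [hx.1]
  have hm : 0 < 1 - x := by linarith [hx.2]
  have hlog : HasDerivAt (fun y ↦ 1 / 2 * (log (1 + y) - log (1 - y))) (1 / (1 - x ^ 2)) x := by
    refine ((((hasDerivAt_id' x).const_add 1).log hp.ne').sub
      (((hasDerivAt_id' x).const_sub 1).log hm.ne')).const_mul (1 / 2) |>.congr_deriv ?_
    have : (1 : ℝ) - x ^ 2 ≠ 0 := by nlinarith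
    field_simp
    ring
  refine hlog.congr_of_eventuallyEq ?_
  filter_upwards [isOpen_Ioo.mem_nhds hx] with y hy
  rw [artanh_eq_half_log (Ioo_subset_Icc_self hy),
    log_div (by linarith [hy.1]) (by linarith [hy.2])]

theorem continuousOn_artanh : ContinuousOn artanh (Ioo (-1) 1) :=
  fun _ hx ↦ (hasDerivAt_artanh hx).continuousAt.continuousWithinAt

theorem one_div_cosh_sq (x : ℝ) : (1 / cosh x) ^ 2 = 1 - tanh x ^ 2 := by
  rw [tanh_eq_sinh_div_cosh]
  field_simp
  linarith [cosh_sq_sub_sinh_sq x]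

theorem tanh_nonneg {x : ℝ} (hx : 0 ≤ x) : 0 ≤ tanh x := by
  rw [tanh_eq_sinh_div_cosh]
  exact div_nonneg (sinh_nonneg_iff.2 hx) (cosh_pos x).le

end Real

theorem hasDerivAt_sqrt_one_sub_sub_artanh {y : ℝ} (hy : y ∈ Ioo 0 1) :
    HasDerivAt (fun y ↦ 2 * (√(1 - y) - artanh √(1 - y))) (√(1 - y) / y) y := by
  obtain ⟨hy0, hy1⟩ := hy
  set u := √(1 - y)
  have hu0 : 0 < u := sqrt_pos.2 (by linarith)
  have hu2 : u ^ 2 = 1 - y := sq_sqrt (by linarith)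
  have hu1 : u < 1 := by nlinarith
  have hsqrt : HasDerivAt (fun y ↦ √(1 - y)) (-1 / (2 * u)) y :=
    ((hasDerivAt_id' y).const_sub 1).sqrt (sub_pos.2 hy1).ne'
  have hartanh := (hasDerivAt_artanh ⟨by linarith, hu1⟩).comp y hsqrt
  refine ((hsqrt.sub hartanh).const_mul 2).congr_deriv ?_
  rw [show y = 1 - u ^ 2 by linarith]
  have : (1 : ℝ) - u ^ 2 ≠ 0 := by nlinarith
  field_simp
  ring

theorem integral_sqrt_one_sub_div_eq_artanh {a : ℝ} (ha0 : 0 ≤ a) (ha1 : a < 1) :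
    ∫ y in 1 - a ^ 2..1, √(1 - y) / y = 2 * (artanh a - a) := by
  have hpos : 0 < 1 - a ^ 2 := by nlinarith
  have hle : 1 - a ^ 2 ≤ 1 := by nlinarith
  have hsqrt_mem : ∀ y ∈ Icc (1 - a ^ 2) 1, √(1 - y) ∈ Ioo (-1) 1 := by
    intro y hy
    refine ⟨by linarith [sqrt_nonneg (1 - y)], ?_⟩
    calc √(1 - y) ≤ √(a ^ 2) := sqrt_le_sqrt (by linarith [hy.1])
      _ = a := sqrt_sq ha0
      _ < 1 := ha1
  have hcont_sqrt : Continuous fun y : ℝ ↦ √(1 - y) := by fun_prop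
  have hcont : ContinuousOn (fun y ↦ 2 * (√(1 - y) - artanh √(1 - y))) (Icc (1 - a ^ 2) 1) :=
    continuousOn_const.mul
      (hcont_sqrt.continuousOn.sub (continuousOn_artanh.comp hcont_sqrt.continuousOn hsqrt_mem))
  rw [intervalIntegral.integral_eq_sub_of_hasDerivAt_of_le hle hcont
    (fun y hy ↦ hasDerivAt_sqrt_one_sub_sub_artanh ⟨hpos.trans hy.1, hy.2⟩)]
  · simp only [sub_self, sqrt_zero, artanh_zero, mul_zero, sub_sub_cancel, sqrt_sq ha0,
      zero_sub]
    ring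
  · refine (hcont_sqrt.continuousOn.div continuousOn_id fun y hy ↦ ?_).intervalIntegrable
    rw [uIcc_of_le hle] at hy
    exact (hpos.trans_le hy.1).ne'

/-- If `ξ > 0` satisfies `tanh ξ = ξ - 1/6` and `x = sech(ξ)²`, then
`(3/2) · ∫_x^1 √(1-y)/y dy = 1/2`. -/
theorem median_eq_a_three_halves (ξ x : ℝ) (hξ : 0 < ξ)
    (htanh : Real.tanh ξ = ξ - 1 / 6) (hx : x = (1 / Real.cosh ξ) ^ 2) :
    (3 / 2) * ∫ y in x..1, Real.sqrt (1 - y) / y = 1 / 2 := by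
  rw [hx, one_div_cosh_sq,
    integral_sqrt_one_sub_div_eq_artanh (tanh_nonneg hξ.le) (tanh_lt_one ξ), artanh_tanh, htanh]
  ring
end

section
/- A permutation σ of a finite set is a square (σ = τ² for some permutation τ) if and only if for every positive integer ℓ, the number of cycles of σ of length 2ℓ is even. -/
/-! The `k`-th power of an `n`-cycle moves every point of its support with the same period
`n / gcd n k`, so it splits into `gcd n k` cycles of that length. In particular the square of an
odd cycle is a cycle of the same length and the square of a `2q`-cycle is a pair of `q`-cycles,
so the even-length cycles of a square come in pairs. Conversely, if they do, merging each pair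
of `q`-cycles into one `2q`-cycle and keeping the odd cycles gives a cycle type such that any
permutation `τ` of that type squares to a conjugate `g⁻¹ σ g` of `σ`; then `g τ g⁻¹` is a square
root of `σ`. -/

open Finset

theorem Multiset.even_iff_forall_even_count {β : Type*} [DecidableEq β] (s : Multiset β) :
    Even s ↔ ∀ a, Even (s.count a) := by
  constructor
  · rintro ⟨t, rfl⟩ a
    exact ⟨t.count a, Multiset.count_add ..⟩
  · intro h
    refine ⟨∑ a ∈ s.toFinset, (s.count a / 2) • {a}, ?_⟩
    rw [← two_nsmul, Finset.smul_sum]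
    conv_lhs => rw [← Multiset.toFinset_sum_count_nsmul_eq s]
    refine Finset.sum_congr rfl fun a _ => ?_
    rw [smul_smul, Nat.mul_div_cancel' (even_iff_two_dvd.mp (h a))]

theorem Multiset.bind_singleton_eq_self {β : Type*} (s : Multiset β) : s.bind ({·}) = s :=
  (Multiset.bind_singleton (s := s) id).trans (Multiset.map_id s)

namespace Equiv.Perm

variable {α : Type*} [Fintype α] [DecidableEq α]

theorem eq_orderOf_of_mem_cycleType {g : Perm α}
    (hg : ∀ x ∈ g.support, ∀ k : ℕ, (g ^ k) x = x → g ^ k = 1) {n : ℕ}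
    (hn : n ∈ g.cycleType) : n = orderOf g := by
  rw [cycleType_def, Multiset.mem_map] at hn
  obtain ⟨c, hc, rfl⟩ := hn
  have hcyc := (mem_cycleFactorsFinset_iff.mp hc).1
  obtain ⟨x, hx⟩ := hcyc.nonempty_support
  have hcx : c = g.cycleOf x := cycle_is_cycleOf hx hc
  refine Nat.dvd_antisymm (dvd_of_mem_cycleType ?_) (orderOf_dvd_of_pow_eq_one ?_)
  · exact Multiset.mem_map_of_mem _ hc
  · refine hg x (mem_cycleFactorsFinset_support_le hc hx) _ ?_
    rw [Function.comp_apply, ← hcyc.orderOf, hcx, ← cycleOf_pow_apply_self,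
      pow_orderOf_eq_one, one_apply]

theorem cycleType_eq_replicate_orderOf {g : Perm α}
    (hg : ∀ x ∈ g.support, ∀ k : ℕ, (g ^ k) x = x → g ^ k = 1) :
    g.cycleType = Multiset.replicate (#g.support / orderOf g) (orderOf g) := by
  have hrep : g.cycleType = Multiset.replicate (Multiset.card g.cycleType) (orderOf g) :=
    Multiset.eq_replicate_card.mpr fun n hn => eq_orderOf_of_mem_cycleType hg hn
  have hsum : #g.support = Multiset.card g.cycleType * orderOf g := by
    rw [← sum_cycleType, hrep, Multiset.sum_replicate, smul_eq_mul, Multiset.card_replicate]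
  rwa [hsum, Nat.mul_div_cancel _ (orderOf_pos g)]

/-- The cycle type of the `k`-th power of an `n`-cycle; if `n ∣ k` that power is `1`, and cycle
types do not record fixed points. -/
def powCycleType (n k : ℕ) : Multiset ℕ :=
  if n ∣ k then 0 else Multiset.replicate (n.gcd k) (n / n.gcd k)

theorem IsCycle.cycleType_pow {c : Perm α} (hc : c.IsCycle) (k : ℕ) :
    (c ^ k).cycleType = powCycleType #c.support k := by
  rw [powCycleType, ← hc.orderOf]
  split_ifs with hdvd
  · rwa [cycleType_eq_zero, ← orderOf_dvd_iff_pow_eq_one]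
  · have hsemiregular :
        ∀ x ∈ (c ^ k).support, ∀ j : ℕ, ((c ^ k) ^ j) x = x → (c ^ k) ^ j = 1 := by
      intro x hx j hj
      rw [← pow_mul] at hj ⊢
      exact (hc.pow_eq_one_iff' (mem_support.mp (support_pow_le c k hx))).mpr hj
    rw [cycleType_eq_replicate_orderOf hsemiregular,
      hc.support_pow_eq_iff.mpr hdvd, orderOf_pow, hc.orderOf,
      Nat.div_div_self (Nat.gcd_dvd_left _ _) (by have := hc.two_le_card_support; omega)]

theorem cycleType_pow (σ : Perm α) (k : ℕ) :
    (σ ^ k).cycleType = σ.cycleType.bind (powCycleType · k) := by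
  induction σ using cycle_induction_on with
  | base_one => simp
  | base_cycles c hc => rw [hc.cycleType_pow, hc.cycleType, Multiset.singleton_bind]
  | induction_disjoint c τ hd _ ihc ihτ =>
    rw [hd.commute.mul_pow, (hd.pow_disjoint_pow k k).cycleType_mul, hd.cycleType_mul,
      Multiset.add_bind, ihc, ihτ]

theorem powCycleType_two_of_odd {n : ℕ} (hn : Odd n) (h1 : 1 < n) : powCycleType n 2 = {n} := by
  have hn2 : ¬ n ∣ 2 := fun h => by
    rcases (Nat.dvd_prime Nat.prime_two).mp h with rfl | rfl
    exacts [h1.false, Nat.not_even_iff_odd.mpr hn even_two]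
  rw [powCycleType, if_neg hn2, hn.coprime_two_right.gcd_eq_one, Nat.div_one,
    Multiset.replicate_one]

theorem powCycleType_two_two_mul {q : ℕ} (hq : 2 ≤ q) :
    powCycleType (2 * q) 2 = Multiset.replicate 2 q := by
  have hn2 : ¬ 2 * q ∣ 2 := fun h => by have := Nat.le_of_dvd two_pos h; omega
  rw [powCycleType, if_neg hn2, Nat.gcd_eq_right (dvd_mul_right 2 q),
    Nat.mul_div_cancel_left q two_pos]

theorem even_count_powCycleType_two (n m : ℕ) : Even ((powCycleType n 2).count (2 * m)) := by
  rw [powCycleType]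
  split_ifs with hn2
  · exact Even.zero
  rw [Multiset.count_replicate]
  split_ifs with hm
  · rcases Nat.even_or_odd n with hev | hodd
    · rw [Nat.gcd_eq_right (even_iff_two_dvd.mp hev)]
      exact even_two
    · rw [hodd.coprime_two_right.gcd_eq_one, Nat.div_one] at hm
      exact absurd (hm ▸ even_two_mul m) (Nat.not_even_iff_odd.mpr hodd)
  · exact Even.zero

theorem bind_powCycleType_two_of_odd {s : Multiset ℕ} (hs : ∀ n ∈ s, Odd n ∧ 1 < n) :
    s.bind (powCycleType · 2) = s :=
  calc s.bind (powCycleType · 2) = s.bind ({·}) :=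
        Multiset.bind_congr fun n hn => powCycleType_two_of_odd (hs n hn).1 (hs n hn).2
    _ = s := Multiset.bind_singleton_eq_self s

theorem bind_powCycleType_two_map_two_mul {s : Multiset ℕ} (hs : ∀ q ∈ s, 2 ≤ q) :
    (s.map (2 * ·)).bind (powCycleType · 2) = s + s :=
  calc (s.map (2 * ·)).bind (powCycleType · 2) = s.bind fun q => {q} + {q} := by
        rw [Multiset.bind_map]
        refine Multiset.bind_congr fun q hq => ?_
        rw [powCycleType_two_two_mul (hs q hq)]
        rfl
    _ = s + s := by
        rw [Multiset.bind_add, Multiset.bind_singleton_eq_self]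

theorem even_count_two_mul_cycleType_sq (τ : Perm α) (m : ℕ) :
    Even ((τ ^ 2).cycleType.count (2 * m)) := by
  rw [cycleType_pow, Multiset.count_bind]
  refine Multiset.sum_induction _ _ (fun _ _ => Even.add) Even.zero fun _ hx => ?_
  obtain ⟨n, -, rfl⟩ := Multiset.mem_map.mp hx
  exact even_count_powCycleType_two n m

theorem even_filter_not_odd_cycleType {σ : Perm α}
    (h : ∀ ℓ : ℕ, 1 ≤ ℓ → Even (σ.cycleType.count (2 * ℓ))) :
    Even (σ.cycleType.filter (¬ Odd ·)) := by
  refine (Multiset.even_iff_forall_even_count _).mpr fun a => ?_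
  rw [Multiset.count_filter]
  rcases Nat.even_or_odd a with ⟨ℓ, rfl⟩ | ha
  · rw [if_pos (Nat.not_odd_iff_even.mpr ⟨ℓ, rfl⟩)]
    rcases Nat.eq_zero_or_pos ℓ with rfl | hℓ
    · rw [Multiset.count_eq_zero.mpr fun h0 => by have := two_le_of_mem_cycleType h0; omega]
      exact Even.zero
    · simpa only [two_mul] using h ℓ hℓ
  · rw [if_neg (not_not.mpr ha)]
    exact Even.zero

/-- `τ` keeps the odd cycles of `σ` and has one `2q`-cycle for each pair of `q`-cycles of `σ`
with `q` even. -/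
theorem exists_cycleType_sq_eq (σ : Perm α)
    (h : ∀ ℓ : ℕ, 1 ≤ ℓ → Even (σ.cycleType.count (2 * ℓ))) :
    ∃ τ : Perm α, (τ ^ 2).cycleType = σ.cycleType := by
  set M := σ.cycleType
  obtain ⟨Q, hQ⟩ := even_filter_not_odd_cycleType h
  have hQ2 : ∀ q ∈ Q, 2 ≤ q := fun q hq => two_le_of_mem_cycleType <|
    Multiset.mem_of_mem_filter (hQ.symm ▸ Multiset.mem_add.mpr (Or.inl hq))
  obtain ⟨τ, hτ⟩ : ∃ τ : Perm α, τ.cycleType = M.filter Odd + Q.map (2 * ·) := by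
    rw [exists_with_cycleType_iff]
    refine ⟨?_, ?_⟩
    · calc (M.filter Odd + Q.map (2 * ·)).sum = (M.filter Odd + (Q + Q)).sum := by
            rw [Multiset.sum_add, Multiset.sum_add, Multiset.sum_add, Multiset.sum_map_mul_left,
              Multiset.map_id', two_mul]
        _ = M.sum := by rw [← hQ, Multiset.filter_add_not]
        _ ≤ Fintype.card α := sum_cycleType_le σ
    · simp only [Multiset.mem_add, Multiset.mem_map]
      rintro a (ha | ⟨q, hq, rfl⟩)
      · exact two_le_of_mem_cycleType (Multiset.mem_of_mem_filter ha)
      · have := hQ2 q hq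
        omega
  have hodd : ∀ n ∈ M.filter Odd, Odd n ∧ 1 < n := fun n hn =>
    ⟨(Multiset.mem_filter.mp hn).2, one_lt_of_mem_cycleType (Multiset.mem_of_mem_filter hn)⟩
  refine ⟨τ, ?_⟩
  rw [cycleType_pow, hτ, Multiset.add_bind, bind_powCycleType_two_of_odd hodd,
    bind_powCycleType_two_map_two_mul hQ2, ← hQ, Multiset.filter_add_not]

end Equiv.Perm

/-- A permutation `σ` of a finite set is a square (`σ = τ²` for some `τ`) iff for
every positive integer `ℓ` the number of cycles of `σ` of length `2ℓ` is even. -/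
theorem isSquare_perm_iff_even_even_cycles {α : Type*} [Fintype α] [DecidableEq α]
    (σ : Equiv.Perm α) :
    (∃ τ : Equiv.Perm α, τ * τ = σ) ↔
      ∀ ℓ : ℕ, 1 ≤ ℓ → Even (σ.cycleType.count (2 * ℓ)) := by
  constructor
  · rintro ⟨τ, rfl⟩ ℓ -
    rw [← sq]
    exact Equiv.Perm.even_count_two_mul_cycleType_sq τ ℓ
  · intro h
    obtain ⟨τ, hτ⟩ := Equiv.Perm.exists_cycleType_sq_eq σ h
    obtain ⟨g, hg⟩ := isConj_iff.mp (Equiv.Perm.isConj_of_cycleType_eq hτ)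
    exact ⟨g * τ * g⁻¹, by rw [← hg, sq]; group⟩
end
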